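/- For every positive integer n, Σ_{k=1}^{n} μ(k / gcd(n,k)) · (φ(k) / φ(k / gcd(n,k))) · Σ_{l=1}^{⌊n/k⌋} μ(k·l)/(k·l) equals 1 if n = 1 and equals 0 if n > 1. -/

import Mathlib

/-!
The inner coefficient `μ(k/(n,k)) φ(k)/φ(k/(n,k))` is von Sterneck's closed form of the
Ramanujan sum `c_k(n)`. It is multiplicative in `k`, and a computation on prime powers gives
`∑_{k ∣ m} c_k(n) = m` if `m ∣ n` and `0` otherwise. Collecting the double sum along `m = k l`
therefore leaves `∑_{m ≤ n} (μ(m)/m) ∑_{k ∣ m} c_k(n) = ∑_{m ∣ n} μ(m) = δ(n)`.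
-/

open Finset ArithmeticFunction
open scoped ArithmeticFunction.Moebius ArithmeticFunction.zeta

theorem Nat.sum_Icc_sum_Icc_div_mul {M : Type*} [AddCommMonoid M] (f : ℕ → ℕ → M) (n : ℕ) :
    ∑ k ∈ Icc 1 n, ∑ l ∈ Icc 1 (n / k), f k (k * l) =
      ∑ m ∈ Icc 1 n, ∑ k ∈ m.divisors, f k m := by
  rw [sum_sigma', sum_sigma']
  refine sum_nbij' (fun x => ⟨x.1 * x.2, x.1⟩) (fun y => ⟨y.2, y.1 / y.2⟩) ?_ ?_ ?_ ?_ ?_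
  · rintro ⟨k, l⟩ h
    simp only [mem_sigma, mem_Icc, Nat.mem_divisors] at h ⊢
    obtain ⟨⟨hk, -⟩, hl, hln⟩ := h
    have hkl := (Nat.le_div_iff_mul_le hk).1 hln
    have hkl0 := Nat.mul_pos hk hl
    exact ⟨⟨hkl0, by linarith⟩, dvd_mul_right k l, hkl0.ne'⟩
  · rintro ⟨m, k⟩ h
    simp only [mem_sigma, mem_Icc, Nat.mem_divisors] at h ⊢
    obtain ⟨⟨hm, hmn⟩, hkm, -⟩ := h
    have hk := Nat.le_of_dvd hm hkm
    have hk0 := Nat.pos_of_dvd_of_pos hkm hm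
    exact ⟨⟨hk0, hk.trans hmn⟩, (Nat.one_le_div_iff hk0).2 hk, Nat.div_le_div_right hmn⟩
  · rintro ⟨k, l⟩ h
    simp only [mem_sigma, mem_Icc] at h
    simp [Nat.mul_div_cancel_left l h.1.1]
  · rintro ⟨m, k⟩ h
    simp only [mem_sigma, Nat.mem_divisors] at h
    simp [Nat.mul_div_cancel' h.2.1]
  · intro x _
    rfl

theorem ArithmeticFunction.sum_divisors_moebius {R : Type*} [Ring R] (n : ℕ) :
    ∑ d ∈ n.divisors, (μ d : R) = if n = 1 then 1 else 0 := by
  rw [← one_apply, ← coe_moebius_mul_coe_zeta, coe_mul_zeta_apply]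
  simp only [intCoe_apply]

/-- Von Sterneck's closed form of the Ramanujan sum `c_k(n)`, as a function of `k`. -/
noncomputable def ramanujanSum (n : ℕ) : ArithmeticFunction ℚ :=
  ⟨fun k => (μ (k / Nat.gcd n k) : ℚ) *
    ((Nat.totient k : ℚ) / (Nat.totient (k / Nat.gcd n k) : ℚ)), by simp⟩

theorem ramanujanSum_apply (n k : ℕ) : ramanujanSum n k =
    (μ (k / Nat.gcd n k) : ℚ) * ((Nat.totient k : ℚ) / (Nat.totient (k / Nat.gcd n k) : ℚ)) :=
  rfl

noncomputable def idOnDivisors (n : ℕ) : ArithmeticFunction ℚ :=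
  ⟨fun m => if m ∣ n then (m : ℚ) else 0, by simp⟩

theorem idOnDivisors_apply (n m : ℕ) : idOnDivisors n m = if m ∣ n then (m : ℚ) else 0 := rfl

theorem isMultiplicative_idOnDivisors (n : ℕ) : (idOnDivisors n).IsMultiplicative := by
  refine ⟨by simp [idOnDivisors_apply], fun {a b} hab => ?_⟩
  have hdvd : a * b ∣ n ↔ a ∣ n ∧ b ∣ n :=
    ⟨fun h => ⟨dvd_of_mul_right_dvd h, dvd_of_mul_left_dvd h⟩,
      fun h => hab.mul_dvd_of_dvd_of_dvd h.1 h.2⟩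
  simp only [idOnDivisors_apply, hdvd]
  by_cases ha : a ∣ n <;> by_cases hb : b ∣ n <;> simp [ha, hb]

theorem isMultiplicative_ramanujanSum (n : ℕ) : (ramanujanSum n).IsMultiplicative := by
  refine ⟨by simp [ramanujanSum_apply], fun {a b} hab => ?_⟩
  have hga : Nat.gcd n a ∣ a := Nat.gcd_dvd_right n a
  have hgb : Nat.gcd n b ∣ b := Nat.gcd_dvd_right n b
  have hquot : a * b / Nat.gcd n (a * b) = a / Nat.gcd n a * (b / Nat.gcd n b) := by
    rw [hab.gcd_mul n, Nat.div_mul_div_comm hga hgb]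
  have hcop : Nat.Coprime (a / Nat.gcd n a) (b / Nat.gcd n b) :=
    (hab.coprime_div_left hga).coprime_div_right hgb
  simp only [ramanujanSum_apply, hquot, Nat.totient_mul hab, Nat.totient_mul hcop,
    isMultiplicative_moebius.map_mul_of_coprime hcop]
  push_cast
  rw [mul_div_mul_comm]
  ring

theorem ramanujanSum_prime_pow_succ {p : ℕ} (hp : p.Prime) (n j : ℕ) :
    ramanujanSum n (p ^ (j + 1)) =
      if p ^ (j + 1) ∣ n then (Nat.totient (p ^ (j + 1)) : ℚ)
      else if p ^ j ∣ n then -(p : ℚ) ^ j else 0 := by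
  obtain ⟨i, hij, hgcd⟩ := (Nat.dvd_prime_pow hp).1 (Nat.gcd_dvd_right n (p ^ (j + 1)))
  have hdvd_iff {e : ℕ} (he : e ≤ j + 1) : p ^ e ∣ n ↔ e ≤ i := by
    rw [← Nat.pow_dvd_pow_iff_le_right hp.one_lt, ← hgcd, Nat.dvd_gcd_iff,
      and_iff_left (pow_dvd_pow p he)]
  simp only [hdvd_iff le_rfl, hdvd_iff j.le_succ, ramanujanSum_apply, hgcd,
    Nat.pow_div hij hp.pos]
  obtain rfl | rfl | hlt : i = j + 1 ∨ i = j ∨ i < j := by omega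
  · simp
  · have hp1 : ((p - 1 : ℕ) : ℚ) ≠ 0 := Nat.cast_ne_zero.2 (Nat.sub_ne_zero_of_lt hp.one_lt)
    simp [Nat.totient_prime_pow_succ hp, Nat.totient_prime hp, moebius_apply_prime hp, hp1]
  · rw [if_neg (by omega), if_neg (by omega),
      moebius_apply_prime_pow hp (by omega), if_neg (by omega)]
    simp

theorem sum_range_ramanujanSum_prime_pow {p : ℕ} (hp : p.Prime) (n a : ℕ) :
    ∑ j ∈ range (a + 1), ramanujanSum n (p ^ j) = if p ^ a ∣ n then (p : ℚ) ^ a else 0 := by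
  induction a with
  | zero => simp [ramanujanSum_apply]
  | succ a ih =>
    rw [sum_range_succ, ih, ramanujanSum_prime_pow_succ hp]
    by_cases hsucc : p ^ (a + 1) ∣ n
    · have hpow : p ^ a ∣ n := (pow_dvd_pow p a.le_succ).trans hsucc
      simp only [hsucc, hpow, if_true, Nat.totient_prime_pow_succ hp]
      push_cast [hp.one_le]
      ring
    · by_cases hpow : p ^ a ∣ n <;> simp [hsucc, hpow]

theorem ramanujanSum_mul_zeta (n : ℕ) : ramanujanSum n * ζ = idOnDivisors n := by
  refine (IsMultiplicative.eq_iff_eq_on_prime_powers _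
    ((isMultiplicative_ramanujanSum n).mul isMultiplicative_zeta.natCast) _
    (isMultiplicative_idOnDivisors n)).2 fun p a hp => ?_
  rw [coe_mul_zeta_apply, Nat.sum_divisors_prime_pow hp, sum_range_ramanujanSum_prime_pow hp,
    idOnDivisors_apply, Nat.cast_pow]

theorem sum_divisors_ramanujanSum (n m : ℕ) :
    ∑ k ∈ m.divisors, ramanujanSum n k = if m ∣ n then (m : ℚ) else 0 := by
  rw [← coe_mul_zeta_apply, ramanujanSum_mul_zeta, idOnDivisors_apply]

theorem kronecker_formula_general (n : ℕ) :
    ∑ k ∈ Icc 1 n,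
        (μ (k / Nat.gcd n k) : ℚ) *
          ((Nat.totient k : ℚ) / (Nat.totient (k / Nat.gcd n k) : ℚ)) *
          ∑ l ∈ Icc 1 (n / k), (μ (k * l) : ℚ) / ((k : ℚ) * l) =
      if n = 1 then 1 else 0 := by
  calc _ = ∑ k ∈ Icc 1 n, ∑ l ∈ Icc 1 (n / k),
          ramanujanSum n k * ((μ (k * l) : ℚ) / (k * l : ℕ)) := by
        simp_rw [mul_sum, Nat.cast_mul, ramanujanSum_apply]
    _ = ∑ m ∈ Icc 1 n, (∑ k ∈ m.divisors, ramanujanSum n k) * ((μ m : ℚ) / m) := by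
        simp_rw [Nat.sum_Icc_sum_Icc_div_mul (fun k m => ramanujanSum n k * ((μ m : ℚ) / m)),
          sum_mul]
    _ = ∑ m ∈ Icc 1 n with m ∣ n, (μ m : ℚ) := by
        rw [sum_filter]
        refine sum_congr rfl fun m hm => ?_
        have hm0 : (m : ℚ) ≠ 0 := Nat.cast_ne_zero.2 (Nat.one_le_iff_ne_zero.1 (mem_Icc.1 hm).1)
        rw [sum_divisors_ramanujanSum]
        split_ifs
        · field_simp
        · simp
    _ = ∑ m ∈ n.divisors, (μ m : ℚ) := rfl
    _ = _ := sum_divisors_moebius n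

theorem kronecker_formula (n : ℕ) (hn : 0 < n) :
    ∑ k ∈ Icc 1 n,
        (μ (k / Nat.gcd n k) : ℚ) *
          ((Nat.totient k : ℚ) / (Nat.totient (k / Nat.gcd n k) : ℚ)) *
          ∑ l ∈ Icc 1 (n / k), (μ (k * l) : ℚ) / ((k : ℚ) * l) =
      if n = 1 then 1 else 0 :=
  kronecker_formula_general n
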